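/- arXiv:2001.03938 — 2 statements merged into one kernel-verified Lean document; each statement's English description precedes it below -/
import Mathlib

section
/- Let G be the graph on 5 vertices whose complement Ḡ = G_{(c)} consists of a 4-cycle 1-2-3-4-1 with an additional vertex 5 adjacent to vertices 1 and 3 (equivalently, Ḡ has edges {1,2},{2,3},{3,4},{1,4},{1,5},{3,5}). Then over any field, the edge ideal I(G) satisfies index(I(G)) = 1 and pd(I(G)) = 2, so I(G) has almost maximal finite index. -/
open Finsupp

namespace EP

variable (K : Type) [Field K]

/-! ## Simplicial chains over a linearly ordered vertex set -/

variable {V : Type} [Fintype V] [DecidableEq V] [LinearOrder V]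

/-- Boundary of a single (oriented) face, given as a finset. -/
noncomputable def bdFace (s : Finset V) : Finset V →₀ K :=
  ∑ v ∈ s, ((-1 : K) ^ ((s.filter (fun w => w < v)).card)) • Finsupp.single (s.erase v) 1

/-- The simplicial boundary map on the free module on all finsets of vertices
(the augmented oriented chain complex, with the empty set playing the role of
the `(-1)`-dimensional face). -/
noncomputable def bdS : (Finset V →₀ K) →ₗ[K] (Finset V →₀ K) :=
  Finsupp.lsum K fun s => LinearMap.toSpanSingleton K (Finset V →₀ K) (bdFace K s)

/-- Chains supported on faces of a complex `Δ` having `k` vertices. -/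
noncomputable def faceSpan (Δ : Set (Finset V)) (k : ℕ) : Submodule K (Finset V →₀ K) :=
  Submodule.span K {c | ∃ F ∈ Δ, F.card = k ∧ c = Finsupp.single F 1}

/-- Dimension of the `d`-th reduced simplicial homology of `Δ` over `K`. -/
noncomputable def redHomRank (Δ : Set (Finset V)) (d : ℕ) : ℕ :=
  Module.finrank K ↥(faceSpan K Δ (d+1) ⊓ LinearMap.ker (bdS K)) -
    Module.finrank K
      ↥(Submodule.map (bdS K) (faceSpan K Δ (d+2)) ⊓
          (faceSpan K Δ (d+1) ⊓ LinearMap.ker (bdS K)))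

/-- The flag complex of a graph: faces are the cliques. -/
def flagComplex (G : SimpleGraph V) : Set (Finset V) :=
  {F | ∀ i ∈ F, ∀ j ∈ F, i ≠ j → G.Adj i j}

/-- The flag complex of the induced subgraph of `G` on `W`. -/
def flagComplexOn (G : SimpleGraph V) (W : Finset V) : Set (Finset V) :=
  {F | (F : Set V) ⊆ (W : Set V) ∧ ∀ i ∈ F, ∀ j ∈ F, i ≠ j → G.Adj i j}

/-- The induced subcomplex of `Δ` on a vertex subset `W`. -/
def restrictComplex (Δ : Set (Finset V)) (W : Finset V) : Set (Finset V) :=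
  {F | F ∈ Δ ∧ F ⊆ W}

/-- The oriented `1`-chain `[a,b]` (so `[a,b] = -[b,a]`). -/
noncomputable def edgeChain (a b : V) : Finset V →₀ K :=
  if a < b then Finsupp.single {a, b} 1 else -Finsupp.single {a, b} 1

/-- The oriented `2`-chain `[x,y,z]`, antisymmetric under transpositions. -/
noncomputable def triChain (x y z : V) : Finset V →₀ K :=
  if (x < y ∧ y < z) ∨ (y < z ∧ z < x) ∨ (z < x ∧ x < y)
  then Finsupp.single {x, y, z} 1
  else -Finsupp.single {x, y, z} 1

/-! ## Graded Betti numbers of monomial ideals via the Taylor complex -/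

variable {n : ℕ}

/-- The multidegree lcm of the monomial generators indexed by `S`. -/
def mlcm {r : ℕ} (g : Fin r → (Fin n → ℕ)) (S : Finset (Fin r)) : Fin n → ℕ :=
  fun x => S.sup fun k => g k x

/-- The differential of the Taylor complex tensored with the residue field `K`. -/
noncomputable def bdT {r : ℕ} (g : Fin r → (Fin n → ℕ)) :
    (Finset (Fin r) →₀ K) →ₗ[K] (Finset (Fin r) →₀ K) :=
  Finsupp.lsum K fun S => LinearMap.toSpanSingleton K (Finset (Fin r) →₀ K)
    (∑ k ∈ S, if mlcm g (S.erase k) = mlcm g S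
      then ((-1 : K) ^ ((S.filter (fun j => j < k)).card)) • Finsupp.single (S.erase k) (1 : K)
      else 0)

/-- The degree-`j` strand of the Taylor complex in homological degree `p`. -/
noncomputable def strand {r : ℕ} (g : Fin r → (Fin n → ℕ)) (p j : ℕ) :
    Submodule K (Finset (Fin r) →₀ K) :=
  Submodule.span K
    {c | ∃ S : Finset (Fin r), S.card = p ∧ (∑ x, mlcm g S x) = j ∧ c = Finsupp.single S 1}

/-- `dim_K Tor_p(S/I, K)_j`, computed from the Taylor complex on the monomial
generators `g` of `I`. -/
noncomputable def torRank {r : ℕ} (g : Fin r → (Fin n → ℕ)) (p j : ℕ) : ℕ :=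
  Module.finrank K ↥(strand K g p j ⊓ LinearMap.ker (bdT K g)) -
    Module.finrank K
      ↥(Submodule.map (bdT K g) (strand K g (p+1) j) ⊓
          (strand K g p j ⊓ LinearMap.ker (bdT K g)))

/-- The graded Betti number `β_{i,j}(I)` of the monomial ideal `I` generated by
the monomials with exponent vectors `g`, i.e. `dim_K Tor_i(I, K)_j = dim_K Tor_{i+1}(S/I, K)_j`. -/
noncomputable def betti {r : ℕ} (g : Fin r → (Fin n → ℕ)) (i j : ℕ) : ℕ :=
  torRank K g (i+1) j

/-- The monomial with exponent vector `a`. -/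
noncomputable def mono (a : Fin n → ℕ) : MvPolynomial (Fin n) K :=
  MvPolynomial.monomial (Finsupp.equivFunOnFinite.symm a) 1

/-- `g` is a list of exponent vectors of monomials generating the ideal `I`. -/
def IsGenSet {r : ℕ} (g : Fin r → (Fin n → ℕ)) (I : Ideal (MvPolynomial (Fin n) K)) : Prop :=
  Ideal.span (Set.range fun k => mono K (g k)) = I

/-- The ideal (generated by the monomials with exponent vectors `g`) has a
`d`-linear resolution. -/
def HasLinRes {r : ℕ} (g : Fin r → (Fin n → ℕ)) (d : ℕ) : Prop :=
  ∀ i j, betti K g i j ≠ 0 → j = i + d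

/-- Castelnuovo–Mumford regularity of a monomial ideal, from its Betti numbers. -/
noncomputable def regT {r : ℕ} (g : Fin r → (Fin n → ℕ)) : ℕ :=
  sSup {d | ∃ i j, betti K g i j ≠ 0 ∧ j = i + d}

/-! ## Edge ideals -/

/-- The edge ideal of a simple graph. -/
noncomputable def edgeIdeal (G : SimpleGraph (Fin n)) : Ideal (MvPolynomial (Fin n) K) :=
  Ideal.span {m | ∃ i j : Fin n, G.Adj i j ∧ m = MvPolynomial.X i * MvPolynomial.X j}

/-- The edge set of `G` as a finset. -/
noncomputable def edgeFins (G : SimpleGraph (Fin n)) : Finset (Sym2 (Fin n)) :=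
  letI : Fintype ↥G.edgeSet := Fintype.ofFinite _
  G.edgeFinset

/-- The canonical monomial (exponent vector) generators of the edge ideal of `G`. -/
noncomputable def edgeGens (G : SimpleGraph (Fin n)) : Fin (edgeFins G).card → (Fin n → ℕ) :=
  fun k x => if x ∈ ((edgeFins G).equivFin.symm k : Sym2 (Fin n)) then 1 else 0

/-- The graded Betti numbers `β_{i,j}(I(G))` of the edge ideal of `G` over `K`. -/
noncomputable def gBetti (G : SimpleGraph (Fin n)) (i j : ℕ) : ℕ :=
  betti K (edgeGens G) i j

/-- The projective dimension `pd(I(G))` of the edge ideal of `G` over `K`. -/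
noncomputable def gPd (G : SimpleGraph (Fin n)) : ℕ :=
  sSup {i | ∃ j, gBetti K G i j ≠ 0}

/-- The Green–Lazarsfeld index of the edge ideal of `G` over `K`
(`⊤` iff the ideal has a linear resolution). -/
noncomputable def gIndex (G : SimpleGraph (Fin n)) : ℕ∞ :=
  sInf {N : ℕ∞ | ∃ i j : ℕ, N = (i : ℕ∞) ∧ i + 2 < j ∧ gBetti K G i j ≠ 0}

/-- The regularity of the edge ideal of `G` over `K`. -/
noncomputable def gReg (G : SimpleGraph (Fin n)) : ℕ :=
  sSup {d | ∃ i j, gBetti K G i j ≠ 0 ∧ j = i + d}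

/-- The edge ideal of `G` has a (2-)linear resolution over `K`. -/
def gLinRes (G : SimpleGraph (Fin n)) : Prop :=
  ∀ i j, gBetti K G i j ≠ 0 → j = i + 2

/-- The edge ideal of `G` has almost maximal finite index over `K`:
`index(I(G)) = pd(I(G)) - 1` (with the index finite). -/
def AMFI (G : SimpleGraph (Fin n)) : Prop :=
  gIndex K G + 1 = (gPd K G : ℕ∞)

/-! ## Graph-theoretic notions -/

/-- `H` contains an induced (chordless) cycle of length `l`. -/
def HasInducedCycle {W : Type} (H : SimpleGraph W) (l : ℕ) : Prop :=
  ∃ f : ZMod l → W, Function.Injective f ∧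
    ∀ i j : ZMod l, H.Adj (f i) (f j) ↔ (j = i + 1 ∨ i = j + 1)

/-- `H` is chordal: it has no induced cycle of length greater than `3`. -/
def Chordal {W : Type} (H : SimpleGraph W) : Prop :=
  ∀ l : ℕ, 3 < l → ¬ HasInducedCycle H l

end EP


/-- The graph `G_{(c)}`: a `4`-cycle `0 - 1 - 2 - 3 - 0` with a fifth vertex `4` adjacent to
the vertices `0` and `2`. -/
def Gc : SimpleGraph (Fin 5) :=
  SimpleGraph.fromRel (fun i j =>
    (i, j) ∈ ([(0, 1), (1, 2), (2, 3), (0, 3), (0, 4), (2, 4)] : List (Fin 5 × Fin 5)))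

/-!
With `Gcᶜ` the edge ideal is `(x₀x₂, x₁x₃, x₁x₄, x₃x₄)`, an edge disjoint from a triangle, and its
Betti numbers are read off the Taylor complex tensored with `K`, whose differential keeps exactly the
faces whose lcm does not drop. The pair `{x₀x₂, x₁x₃}` is a cycle of degree 4 and no triple has
degree 4, so `β_{1,4} ≠ 0`, while all generators are quadrics: the index is 1. The triples
`{x₀x₂, x₁x₃, x₁x₄}` and `{x₀x₂, x₁x₃, x₃x₄}` are independent cycles of degree 5 against a single
face of size 4, so `β_{2,5} ≠ 0`; that face is not a cycle, since dropping `x₁x₃` keeps its lcm, so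
nothing survives beyond homological degree 2 and `pd = 2`.
-/

namespace EP

section TaylorComplex

variable {K : Type} [Field K] {n r : ℕ} (g : Fin r → Fin n → ℕ)

lemma mlcm_map {m : ℕ} (e : Fin m ↪ Fin r) (s : Finset (Fin m)) :
    mlcm g (s.map e) = mlcm (g ∘ e) s := by
  funext x
  simp only [mlcm, Finset.sup_map, Function.comp_def]

lemma bdT_single (S : Finset (Fin r)) :
    bdT K g (single S 1) =
      ∑ k ∈ S, if mlcm g (S.erase k) = mlcm g S
        then ((-1 : K) ^ (S.filter (· < k)).card) • single (S.erase k) (1 : K)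
        else 0 := by
  rw [bdT, lsum_single, LinearMap.toSpanSingleton_apply_one]

lemma bdT_single_eq_zero {S : Finset (Fin r)}
    (h : ∀ k ∈ S, mlcm g (S.erase k) ≠ mlcm g S) : bdT K g (single S 1) = 0 := by
  rw [bdT_single]
  exact Finset.sum_eq_zero fun k hk => if_neg (h k hk)

/-- The face `S.erase k` occurs in the boundary of `S` with coefficient `± 1` and in no other term. -/
lemma bdT_single_ne_zero {S : Finset (Fin r)} {k : Fin r} (hk : k ∈ S)
    (h : mlcm g (S.erase k) = mlcm g S) : bdT K g (single S 1) ≠ 0 := by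
  intro hzero
  have hcoeff := congrArg (· (S.erase k)) hzero
  simp only [bdT_single, coe_zero, Pi.zero_apply, finsetSum_apply] at hcoeff
  rw [Finset.sum_eq_single k, if_pos h, Finsupp.smul_apply, single_eq_same, smul_eq_mul, mul_one]
    at hcoeff
  · exact pow_ne_zero _ (neg_ne_zero.mpr one_ne_zero) hcoeff
  · intro l hl hlk
    have hne : S.erase l ≠ S.erase k := fun heq =>
      Finset.notMem_erase k S (heq ▸ Finset.mem_erase.mpr ⟨Ne.symm hlk, hk⟩)
    split_ifs <;> simp [hne]
  · exact fun hk' => absurd hk hk'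

lemma single_mem_strand {S : Finset (Fin r)} {p j : ℕ} (hp : S.card = p)
    (hj : ∑ x, mlcm g S x = j) : single S (1 : K) ∈ strand K g p j :=
  Submodule.subset_span ⟨S, hp, hj, rfl⟩

lemma strand_eq_bot {p j : ℕ} (h : ∀ S : Finset (Fin r), S.card = p → ∑ x, mlcm g S x ≠ j) :
    strand K g p j = ⊥ := by
  rw [strand, Submodule.span_eq_bot]
  rintro c ⟨S, hp, hj, rfl⟩
  exact absurd hj (h S hp)

lemma strand_card_le_span_univ (j : ℕ) :
    strand K g r j ≤ K ∙ single Finset.univ (1 : K) := by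
  rw [strand, Submodule.span_le]
  rintro c ⟨S, hp, -, rfl⟩
  rw [Finset.eq_univ_of_card S (by rw [hp, Fintype.card_fin])]
  exact Submodule.mem_span_singleton_self _

lemma finrank_strand_card_le_one (j : ℕ) : Module.finrank K (strand K g r j) ≤ 1 :=
  (Submodule.finrank_mono (strand_card_le_span_univ g j)).trans
    (finrank_span_singleton (single_ne_zero.mpr one_ne_zero)).le

lemma torRank_eq_zero_of_strand_eq_bot {p j : ℕ} (h : strand K g p j = ⊥) :
    torRank K g p j = 0 := by
  rw [torRank, h, bot_inf_eq, finrank_bot, Nat.zero_sub]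

/-- The top strand is spanned by the single face `univ`, so it has no cycles once `univ` does not. -/
lemma torRank_eq_zero_of_card_le (htop : bdT K g (single Finset.univ 1) ≠ 0) {p : ℕ}
    (hp : r ≤ p) (j : ℕ) : torRank K g p j = 0 := by
  rcases hp.lt_or_eq with hlt | rfl
  · refine torRank_eq_zero_of_strand_eq_bot g (strand_eq_bot g fun S hS _ => ?_)
    have := S.card_le_univ
    simp only [Fintype.card_fin] at this
    omega
  · have hcycles : strand K g r j ⊓ LinearMap.ker (bdT K g) = ⊥ := by
      rw [eq_bot_iff]
      rintro x ⟨hx, hker⟩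
      obtain ⟨t, rfl⟩ := Submodule.mem_span_singleton.mp (strand_card_le_span_univ g j hx)
      have hzero : t • bdT K g (single Finset.univ 1) = 0 := by
        rw [← map_smul]
        exact hker
      rw [(smul_eq_zero.mp hzero).resolve_right htop, zero_smul]
      exact Submodule.zero_mem ⊥
    rw [torRank, hcycles, finrank_bot, Nat.zero_sub]

lemma le_finrank_of_single_mem {ι : Type} [Finite ι] {m : ℕ} {P : Submodule K (ι →₀ K)}
    (S : Fin m → ι) (hS : Function.Injective S) (hP : ∀ i, single (S i) (1 : K) ∈ P) :
    m ≤ Module.finrank K P := by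
  have hli : LinearIndependent K fun i => single (S i) (1 : K) := by
    simpa [Function.comp_def] using (linearIndependent_single_one K ι).comp S hS
  calc m = Module.finrank K (Submodule.span K (Set.range fun i => single (S i) (1 : K))) := by
        rw [finrank_span_eq_card hli, Fintype.card_fin]
    _ ≤ Module.finrank K P := Submodule.finrank_mono (Submodule.span_le.mpr (by
        rintro _ ⟨i, rfl⟩
        exact hP i))

lemma torRank_ne_zero_of_cycles {m p j : ℕ} (S : Fin m → Finset (Fin r))
    (hS : Function.Injective S) (hp : ∀ i, (S i).card = p) (hj : ∀ i, ∑ x, mlcm g (S i) x = j)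
    (hcycle : ∀ i, ∀ k ∈ S i, mlcm g ((S i).erase k) ≠ mlcm g (S i))
    (hlt : Module.finrank K (strand K g (p + 1) j) < m) : torRank K g p j ≠ 0 := by
  have hcycles : m ≤ Module.finrank K ↥(strand K g p j ⊓ LinearMap.ker (bdT K g)) :=
    le_finrank_of_single_mem S hS fun i =>
      ⟨single_mem_strand g (hp i) (hj i), bdT_single_eq_zero g (hcycle i)⟩
  have hboundaries : Module.finrank K ↥(Submodule.map (bdT K g) (strand K g (p + 1) j) ⊓
      (strand K g p j ⊓ LinearMap.ker (bdT K g))) ≤ Module.finrank K (strand K g (p + 1) j) :=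
    (Submodule.finrank_mono inf_le_left).trans (Submodule.finrank_map_le _ _)
  rw [torRank]
  omega

end TaylorComplex

section Index

variable (K : Type) [Field K] {n : ℕ} (G : SimpleGraph (Fin n))

lemma gIndex_eq_one (hlin : ∀ j, 2 < j → gBetti K G 0 j = 0) {j : ℕ} (hj : 3 < j)
    (hβ : gBetti K G 1 j ≠ 0) : gIndex K G = 1 := by
  refine le_antisymm (sInf_le ⟨1, j, by norm_num, hj, hβ⟩) (le_sInf ?_)
  rintro _ ⟨i, j', rfl, hij', hβ'⟩
  rcases Nat.eq_zero_or_pos i with rfl | hi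
  · exact absurd (hlin j' (by omega)) hβ'
  · exact_mod_cast hi

lemma gPd_eq {p j : ℕ} (hβ : gBetti K G p j ≠ 0) (hvanish : ∀ i j, p < i → gBetti K G i j = 0) :
    gPd K G = p := by
  have hbdd : ∀ i ∈ {i | ∃ j, gBetti K G i j ≠ 0}, i ≤ p := by
    rintro i ⟨j', hβ'⟩
    by_contra! hi
    exact hβ' (hvanish i j' hi)
  exact le_antisymm (csSup_le ⟨p, j, hβ⟩ hbdd) (le_csSup ⟨p, hbdd⟩ ⟨j, hβ⟩)

end Index

lemma edgeGens_equivFin {n : ℕ} (G : SimpleGraph (Fin n)) {ι : Type} (σ : ι ≃ edgeFins G)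
    (i : ι) : edgeGens G ((edgeFins G).equivFin (σ i)) =
      fun x => if x ∈ (σ i : Sym2 (Fin n)) then 1 else 0 := by
  funext x
  rw [edgeGens, Equiv.symm_apply_apply]

end EP

open EP

def complGcEdge : Fin 4 → Sym2 (Fin 5) := ![s(0, 2), s(1, 3), s(1, 4), s(3, 4)]

def complGcGens (i : Fin 4) (x : Fin 5) : ℕ := if x ∈ complGcEdge i then 1 else 0

lemma mem_range_complGcEdge_iff (e : Sym2 (Fin 5)) :
    e ∈ Set.range complGcEdge ↔ e ∈ edgeFins Gcᶜ := by
  simp only [edgeFins, SimpleGraph.mem_edgeFinset]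
  induction e using Sym2.ind with
  | _ a b =>
    simp only [Set.mem_range, SimpleGraph.mem_edgeSet, SimpleGraph.compl_adj, Gc,
      SimpleGraph.fromRel_adj]
    revert a b
    decide

noncomputable def complGcEdgeEquiv : Fin 4 ≃ edgeFins Gcᶜ :=
  (Equiv.ofInjective complGcEdge (by decide)).trans
    (Equiv.subtypeEquivRight mem_range_complGcEdge_iff)

/- The enumeration `edgeGens` of the edges is not computable, so every fact about the Taylor
complex of `I(Gcᶜ)` is checked on the explicit list `complGcGens` and moved along a reindexing `e`.
Only sign-free facts (an lcm is or is not preserved by dropping a generator) are moved, which is why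
no comparison of Taylor complexes under reordering of the generators is needed. -/
section ComplGcBetti

variable {K : Type} [Field K] {r : ℕ} {g : Fin r → Fin 5 → ℕ} (e : Fin 4 ≃ Fin r)

lemma mlcm_map_complGc (hg : ∀ i, g (e i) = complGcGens i) (s : Finset (Fin 4)) :
    mlcm g (s.map e.toEmbedding) = mlcm complGcGens s := by
  rw [mlcm_map]
  congr 1
  exact funext hg

lemma mlcm_map_erase_ne_complGc (hg : ∀ i, g (e i) = complGcGens i) {s : Finset (Fin 4)}
    (h : ∀ k ∈ s, mlcm complGcGens (s.erase k) ≠ mlcm complGcGens s) :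
    ∀ k ∈ s.map e.toEmbedding,
      mlcm g ((s.map e.toEmbedding).erase k) ≠ mlcm g (s.map e.toEmbedding) := by
  simp only [Finset.mem_map_equiv]
  intro k hk
  rw [← e.apply_symm_apply k, ← Equiv.coe_toEmbedding, ← Finset.map_erase,
    mlcm_map_complGc e hg, mlcm_map_complGc e hg]
  exact h _ hk

lemma forall_finset_complGc (hg : ∀ i, g (e i) = complGcGens i)
    {Q : ℕ → (Fin 5 → ℕ) → Prop} (h : ∀ s : Finset (Fin 4), Q s.card (mlcm complGcGens s))
    (S : Finset (Fin r)) : Q S.card (mlcm g S) := by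
  obtain ⟨s, rfl⟩ := e.finsetCongr.surjective S
  rw [Equiv.finsetCongr_apply, Finset.card_map, mlcm_map_complGc e hg]
  exact h s

lemma torRank_one_complGc (hg : ∀ i, g (e i) = complGcGens i) {j : ℕ} (hj : j ≠ 2) :
    torRank K g 1 j = 0 := by
  refine torRank_eq_zero_of_strand_eq_bot g (strand_eq_bot g
    (forall_finset_complGc e hg (Q := fun c l => c = 1 → ∑ x, l x ≠ j) fun s hs => ?_))
  rw [(by decide : ∀ s : Finset (Fin 4), s.card = 1 → ∑ x, mlcm complGcGens s x = 2) s hs]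
  exact hj.symm

lemma torRank_two_four_complGc (hg : ∀ i, g (e i) = complGcGens i) : torRank K g 2 4 ≠ 0 := by
  have hstrand : strand K g 3 4 = ⊥ := strand_eq_bot g
    (forall_finset_complGc e hg (Q := fun c l => c = 3 → ∑ x, l x ≠ 4) (by decide))
  let faces : Fin 1 → Finset (Fin 4) := ![{0, 1}]
  refine torRank_ne_zero_of_cycles g (fun i => (faces i).map e.toEmbedding)
    (Function.injective_of_subsingleton _) (fun i => ?_) (fun i => ?_) (fun i => ?_)
    (by simp [hstrand])
  · rw [Finset.card_map]
    revert i
    decide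
  · rw [mlcm_map_complGc e hg]
    revert i
    decide
  · exact mlcm_map_erase_ne_complGc e hg (by revert i; decide)

lemma torRank_three_five_complGc (hg : ∀ i, g (e i) = complGcGens i) :
    torRank K g 3 5 ≠ 0 := by
  obtain rfl : 4 = r := Fin.equiv_iff_eq.mp ⟨e⟩
  let faces : Fin 2 → Finset (Fin 4) := ![{0, 1, 2}, {0, 1, 3}]
  refine torRank_ne_zero_of_cycles g (fun i => (faces i).map e.toEmbedding)
    ((Finset.map_injective _).comp (by decide)) (fun i => ?_) (fun i => ?_) (fun i => ?_)
    ((finrank_strand_card_le_one g 5).trans_lt one_lt_two)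
  · rw [Finset.card_map]
    revert i
    decide
  · rw [mlcm_map_complGc e hg]
    revert i
    decide
  · exact mlcm_map_erase_ne_complGc e hg (by revert i; decide)

lemma torRank_complGc_eq_zero (hg : ∀ i, g (e i) = complGcGens i) {p : ℕ} (hp : 4 ≤ p)
    (j : ℕ) : torRank K g p j = 0 := by
  have htop : mlcm g (Finset.univ.erase (e 1)) = mlcm g Finset.univ := by
    rw [← Finset.map_univ_equiv e, ← Equiv.coe_toEmbedding, ← Finset.map_erase,
      mlcm_map_complGc e hg, mlcm_map_complGc e hg]
    decide
  refine torRank_eq_zero_of_card_le g (bdT_single_ne_zero g (Finset.mem_univ _) htop) ?_ j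
  rw [← Fin.equiv_iff_eq.mp ⟨e⟩]
  exact hp

end ComplGcBetti

/-- If the complement of `G` is the graph `G_{(c)}`, then over any field
`index(I(G)) = 1` and `pd(I(G)) = 2`, so `I(G)` has almost maximal finite index. -/
theorem statement12 (K : Type) [Field K] (G : SimpleGraph (Fin 5)) (hG : Gᶜ = Gc) :
    EP.gIndex K G = 1 ∧ EP.gPd K G = 2 := by
  obtain rfl : G = Gcᶜ := (compl_eq_comm.mp hG).symm
  let e := complGcEdgeEquiv.trans (edgeFins Gcᶜ).equivFin
  have hg : ∀ i, edgeGens Gcᶜ (e i) = complGcGens i := edgeGens_equivFin Gcᶜ complGcEdgeEquiv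
  exact ⟨gIndex_eq_one K _ (fun j hj => torRank_one_complGc e hg (by omega)) (by norm_num)
      (torRank_two_four_complGc e hg),
    gPd_eq K _ (torRank_three_five_complGc e hg)
      fun i j hi => torRank_complGc_eq_zero e hg (by omega) j⟩
end

section
/- Let G be the graph on 6 vertices whose complement Ḡ = G_{(d)_1} is the 4-gonal dipyramid: a 4-cycle 1-2-3-4-1 with two apexes 5 and 6 each adjacent to all of 1,2,3,4 (and 5,6 not adjacent). Then over any field, the edge ideal I = I(G) satisfies index(I) = 1, pd(I) = 2, β_{2,6}(I) = 1, and reg(I) = 4. -/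
open Finsupp

/-- The graph `G_{(d)_1}`: the `4`-gonal dipyramid, i.e. a `4`-cycle `0 - 1 - 2 - 3 - 0`
with two apexes `4` and `5` each adjacent to all of `0, 1, 2, 3` (and `4, 5` not adjacent). -/
def Gd1 : SimpleGraph (Fin 6) :=
  SimpleGraph.fromRel (fun i j =>
    (i, j) ∈ ([(0, 1), (1, 2), (2, 3), (0, 3), (4, 0), (4, 1), (4, 2), (4, 3),
      (5, 0), (5, 1), (5, 2), (5, 3)] : List (Fin 6 × Fin 6)))

/-!
The complement of the dipyramid is the perfect matching `{0,2}, {1,3}, {4,5}`, so `I(G)` is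
generated by three quadrics in pairwise disjoint variables. Removing any generator from a set of
such monomials lowers their lcm, so the Taylor complex has zero differential after tensoring with
`K`: it is the (minimal) Koszul complex of a regular sequence. Hence `β_{i,j}(I) = C(3, i+1)` for
`j = 2(i+1)` and `0` otherwise, and index, projective dimension and regularity are read off.
-/

namespace EP

section TaylorComplex

variable {K : Type} [Field K] {n r d : ℕ} {g : Fin r → Fin n → ℕ}

theorem mlcm_insert (hg : Pairwise fun k l => ∀ x, g k x = 0 ∨ g l x = 0)
    {a : Fin r} {S : Finset (Fin r)} (ha : a ∉ S) (x : Fin n) :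
    mlcm g (insert a S) x = g a x + mlcm g S x := by
  have hS : g a x ≠ 0 → mlcm g S x = 0 := fun hax =>
    Finset.sup_eq_bot_iff _ _ |>.mpr fun l hl =>
      (hg (ne_of_mem_of_not_mem hl ha).symm x).resolve_left hax
  rw [mlcm, Finset.sup_insert, ← mlcm]
  by_cases hax : g a x = 0
  · simp [hax]
  · simp [hS hax]

theorem sum_mlcm (hg : Pairwise fun k l => ∀ x, g k x = 0 ∨ g l x = 0) (S : Finset (Fin r)) :
    ∑ x, mlcm g S x = ∑ k ∈ S, ∑ x, g k x := by
  induction S using Finset.induction_on with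
  | empty => simp [mlcm]
  | insert a S ha ih =>
    simp only [mlcm_insert hg ha, Finset.sum_add_distrib, ih, Finset.sum_insert ha]

theorem mlcm_erase_ne (hg : Pairwise fun k l => ∀ x, g k x = 0 ∨ g l x = 0)
    {k : Fin r} (hk0 : g k ≠ 0) {S : Finset (Fin r)} (hk : k ∈ S) :
    mlcm g (S.erase k) ≠ mlcm g S := by
  obtain ⟨x, hx⟩ := Function.ne_iff.mp hk0
  intro h
  have := congrFun h x
  rw [← Finset.insert_erase hk, mlcm_insert hg (S.notMem_erase k), Finset.insert_erase hk] at this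
  exact hx (by simpa using this)

theorem bdT_eq_zero (hg : Pairwise fun k l => ∀ x, g k x = 0 ∨ g l x = 0)
    (hg0 : ∀ k, g k ≠ 0) : bdT K g = 0 := by
  refine Finsupp.lhom_ext fun S a => ?_
  rw [bdT, Finsupp.lsum_single, Finset.sum_eq_zero fun k hk => if_neg (mlcm_erase_ne hg (hg0 k) hk)]
  simp

theorem finrank_strand (hg : Pairwise fun k l => ∀ x, g k x = 0 ∨ g l x = 0)
    (hd : ∀ k, ∑ x, g k x = d) (p j : ℕ) :
    Module.finrank K (strand K g p j) = if j = d * p then r.choose p else 0 := by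
  have hdeg (S : Finset (Fin r)) : ∑ x, mlcm g S x = d * S.card := by
    simp [sum_mlcm hg, hd, mul_comm]
  split_ifs with hj
  · have hgen : {c | ∃ S : Finset (Fin r), S.card = p ∧ ∑ x, mlcm g S x = j ∧
        c = Finsupp.single S (1 : K)} =
        Set.range fun S : {S : Finset (Fin r) // S.card = p} => Finsupp.single S.1 (1 : K) := by
      ext c
      simp only [Set.mem_ofPred_eq, Set.mem_range, Subtype.exists, hdeg, hj]
      grind
    rw [strand, hgen, finrank_span_eq_card (b := fun S : {S : Finset (Fin r) // S.card = p} =>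
        Finsupp.single S.1 (1 : K))
      ((Finsupp.linearIndependent_single_one K _).comp _ Subtype.val_injective),
      Fintype.card_finset_len, Fintype.card_fin]
  · have hgen : {c | ∃ S : Finset (Fin r), S.card = p ∧ ∑ x, mlcm g S x = j ∧
        c = Finsupp.single S (1 : K)} = ∅ := by
      ext c
      simp only [Set.mem_ofPred_eq, Set.mem_empty_iff_false, iff_false, hdeg]
      grind
    rw [strand, hgen, Submodule.span_empty, finrank_bot]

theorem betti_of_pairwise_disjoint (hg : Pairwise fun k l => ∀ x, g k x = 0 ∨ g l x = 0)
    (hd : ∀ k, ∑ x, g k x = d) (hd0 : 0 < d) (i j : ℕ) :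
    betti K g i j = if j = d * (i + 1) then r.choose (i + 1) else 0 := by
  have hg0 (k : Fin r) : g k ≠ 0 := by
    intro hk
    have := hd k
    simp only [hk, Pi.zero_apply, Finset.sum_const_zero] at this
    omega
  rw [betti, torRank, bdT_eq_zero hg hg0, LinearMap.ker_zero, Submodule.map_zero, inf_top_eq,
    bot_inf_eq, finrank_bot, Nat.sub_zero, finrank_strand hg hd]

end TaylorComplex

section EdgeIdeal

variable {K : Type} [Field K] {n : ℕ} {G : SimpleGraph (Fin n)}

def IsMatching (G : SimpleGraph (Fin n)) : Prop :=
  ∀ ⦃x y z⦄, G.Adj x y → G.Adj x z → y = z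

@[simp]
theorem mem_edgeFins {e : Sym2 (Fin n)} : e ∈ edgeFins G ↔ e ∈ G.edgeSet := by
  simp [edgeFins]

theorem sum_edgeGens (k : Fin (edgeFins G).card) : ∑ x, edgeGens G k x = 2 := by
  have he := mem_edgeFins.mp ((edgeFins G).equivFin.symm k).2
  simp only [edgeGens]
  generalize ((edgeFins G).equivFin.symm k : Sym2 (Fin n)) = e at he ⊢
  induction e using Sym2.ind with
  | h a b =>
    rw [SimpleGraph.mem_edgeSet] at he
    have hfilter : Finset.univ.filter (· ∈ s(a, b)) = {a, b} := by
      ext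
      simp [Sym2.mem_iff]
    rw [Finset.sum_boole, hfilter, Finset.card_pair he.ne, Nat.cast_ofNat]

theorem IsMatching.edgeGens_pairwise_disjoint (hG : IsMatching G) :
    Pairwise fun k l => ∀ x, edgeGens G k x = 0 ∨ edgeGens G l x = 0 := by
  intro k l hkl x
  simp only [edgeGens, ite_eq_right_iff, one_ne_zero, imp_false, ← not_and_or]
  rintro ⟨hxk, hxl⟩
  have hk := mem_edgeFins.mp ((edgeFins G).equivFin.symm k).2
  have hl := mem_edgeFins.mp ((edgeFins G).equivFin.symm l).2
  obtain ⟨y, hy⟩ := Sym2.mem_iff_exists.mp hxk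
  obtain ⟨z, hz⟩ := Sym2.mem_iff_exists.mp hxl
  rw [hy, SimpleGraph.mem_edgeSet] at hk
  rw [hz, SimpleGraph.mem_edgeSet] at hl
  exact hkl ((edgeFins G).equivFin.symm.injective (Subtype.ext (by rw [hy, hz, hG hk hl])))

theorem IsMatching.gBetti_eq (hG : IsMatching G) (i j : ℕ) :
    gBetti K G i j = if j = 2 * (i + 1) then (edgeFins G).card.choose (i + 1) else 0 :=
  betti_of_pairwise_disjoint hG.edgeGens_pairwise_disjoint sum_edgeGens two_pos i j

theorem IsMatching.gBetti_ne_zero_iff (hG : IsMatching G) {i j : ℕ} :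
    gBetti K G i j ≠ 0 ↔ j = 2 * (i + 1) ∧ i < (edgeFins G).card := by
  rw [hG.gBetti_eq]
  split_ifs with hj
  · simp [hj, Nat.choose_eq_zero_iff]
  · simp [hj]

theorem IsMatching.gIndex_eq_one (hG : IsMatching G) (hr : 2 ≤ (edgeFins G).card) :
    gIndex K G = 1 := by
  refine le_antisymm
    (sInf_le ⟨1, 4, by norm_num, by norm_num, hG.gBetti_ne_zero_iff.mpr ⟨rfl, hr⟩⟩) ?_
  refine le_sInf ?_
  rintro _ ⟨i, j, rfl, hij, hβ⟩
  have := (hG.gBetti_ne_zero_iff.mp hβ).1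
  exact_mod_cast (by omega : 1 ≤ i)

theorem IsMatching.gPd_eq (hG : IsMatching G) : gPd K G = (edgeFins G).card - 1 := by
  have hset : {i | ∃ j, gBetti K G i j ≠ 0} = Set.Iio (edgeFins G).card := by
    ext i
    simp [hG.gBetti_ne_zero_iff]
  rw [gPd, hset]
  cases (edgeFins G).card with
  | zero => simp
  | succ r => rw [Set.Iio_add_one_eq_Iic, csSup_Iic, Nat.add_sub_cancel]

theorem IsMatching.gReg_eq (hG : IsMatching G) (hr : 1 ≤ (edgeFins G).card) :
    gReg K G = (edgeFins G).card + 1 := by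
  have hset : {d | ∃ i j, gBetti K G i j ≠ 0 ∧ j = i + d} = Set.Icc 2 ((edgeFins G).card + 1) := by
    ext d
    simp only [hG.gBetti_ne_zero_iff, Set.mem_ofPred_eq, Set.mem_Icc]
    constructor
    · rintro ⟨i, j, ⟨rfl, hi⟩, hd⟩
      omega
    · rintro ⟨h2, hd⟩
      exact ⟨d - 2, 2 * (d - 1), ⟨by omega, by omega⟩, by omega⟩
  rw [gReg, hset, csSup_Icc (by omega)]

end EdgeIdeal

end EP

instance : DecidableRel Gd1.Adj := fun a b =>
  decidable_of_iff _ (SimpleGraph.fromRel_adj _ a b).symm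

theorem isMatching_compl_Gd1 : EP.IsMatching Gd1ᶜ := by
  unfold EP.IsMatching
  decide

theorem card_edgeFins_compl_Gd1 : (EP.edgeFins Gd1ᶜ).card = 3 := by
  have : EP.edgeFins Gd1ᶜ = {s(0, 2), s(1, 3), s(4, 5)} := by
    ext e
    induction e using Sym2.ind with
    | h a b =>
      rw [EP.mem_edgeFins, SimpleGraph.mem_edgeSet]
      revert a b
      decide
  rw [this]
  decide

/-- If the complement of `G` is the `4`-gonal dipyramid `G_{(d)_1}`, then
over any field `index(I(G)) = 1`, `pd(I(G)) = 2`, `β_{2,6}(I(G)) = 1` and `reg(I(G)) = 4`. -/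
theorem statement13 (K : Type) [Field K] (G : SimpleGraph (Fin 6)) (hG : Gᶜ = Gd1) :
    EP.gIndex K G = 1 ∧ EP.gPd K G = 2 ∧ EP.gBetti K G 2 6 = 1 ∧ EP.gReg K G = 4 := by
  obtain rfl : G = Gd1ᶜ := by rw [← hG, compl_compl]
  have hM := isMatching_compl_Gd1
  have hr := card_edgeFins_compl_Gd1
  refine ⟨hM.gIndex_eq_one (by omega), ?_, ?_, ?_⟩
  · rw [hM.gPd_eq, hr]
  · rw [hM.gBetti_eq, hr]
    rfl
  · rw [hM.gReg_eq (by omega), hr]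
end
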